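/- arXiv:2503.09380 — 2 statements merged into one kernel-verified Lean document; each statement's English description precedes it below -/
import Mathlib

section
/- The infinite series ∑_{n=1}^∞ 1/(n(4n-1)(4n-3)) converges to π/3 - ln 2. -/
open Real Filter Finset Topology

noncomputable def Lb (k : ℕ) : ℝ := ∑ i ∈ Finset.range k, (-1:ℝ)^i / (i+1)
noncomputable def Pa (k : ℕ) : ℝ := ∑ i ∈ Finset.range k, (-1:ℝ)^i / (2*i+1)

lemma neg_one_pow_two_mul (m : ℕ) : ((-1:ℝ))^(2*m) = 1 := by
  rw [pow_mul]; norm_num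

lemma Lb_two_mul (n : ℕ) : Lb (2*n) = (harmonic (2*n) : ℝ) - (harmonic n : ℝ) := by
  induction n with
  | zero => simp [Lb]
  | succ n ih =>
    have h2 : 2 * (n+1) = (2*n) + 1 + 1 := by ring
    rw [h2, Lb, Finset.sum_range_succ, Finset.sum_range_succ, ← Lb, ih,
      harmonic_succ, harmonic_succ, harmonic_succ]
    have e1 : ((-1:ℝ))^(2*n) = 1 := neg_one_pow_two_mul n
    have e2 : ((-1:ℝ))^(2*n+1) = -1 := by rw [pow_succ, e1]; ring
    rw [e1, e2]
    push_cast
    have hx : (n:ℝ) ≥ 0 := Nat.cast_nonneg n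
    field_simp
    ring

lemma tendsto_two_mul : Tendsto (fun n : ℕ => 2*n) atTop atTop :=
  tendsto_atTop_mono (fun n => by simp; omega) tendsto_id

lemma tendsto_Lb_two : Tendsto (fun n => Lb (2*n)) atTop (𝓝 (Real.log 2)) := by
  have h1 := Real.tendsto_harmonic_sub_log.comp tendsto_two_mul
  have h2 := Real.tendsto_harmonic_sub_log
  have h3 := (h1.sub h2).add (tendsto_const_nhds (x := Real.log 2))
  rw [sub_self, zero_add] at h3
  apply h3.congr'
  filter_upwards [eventually_gt_atTop 0] with n hn
  have hn' : (n:ℝ) ≠ 0 := Nat.cast_ne_zero.mpr hn.ne'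
  simp only [Function.comp]
  rw [Lb_two_mul]
  push_cast
  rw [Real.log_mul two_ne_zero hn']
  ring

lemma key (N : ℕ) : ∑ n ∈ Finset.range N, (1:ℝ)/(((n:ℝ)+1)*(4*(n:ℝ)+3)*(4*(n:ℝ)+1))
    = 4/3*Pa (2*N) - 2/3*Lb (4*N) - 1/3*Lb (2*N) := by
  have LbS : ∀ k : ℕ, Lb (k+1) = Lb k + (-1)^k/((k:ℝ)+1) := by
    intro k; rw [Lb, Lb, Finset.sum_range_succ]
  have PaS : ∀ k : ℕ, Pa (k+1) = Pa k + (-1)^k/(2*(k:ℝ)+1) := by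
    intro k; rw [Pa, Pa, Finset.sum_range_succ]
  induction N with
  | zero => simp [Pa, Lb]
  | succ N ih =>
    rw [Finset.sum_range_succ, ih]
    have h2 : 2*(N+1) = 2*N+1+1 := by ring
    have h4 : 4*(N+1) = 4*N+1+1+1+1 := by ring
    rw [h2, h4, PaS, PaS, LbS, LbS, LbS, LbS, LbS, LbS]
    have e1 : ((-1:ℝ))^(2*N) = 1 := neg_one_pow_two_mul N
    have e2 : ((-1:ℝ))^(2*N+1) = -1 := by rw [pow_succ, e1]; ring
    have e3 : ((-1:ℝ))^(4*N) = 1 := by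
      have : 4*N = 2*(2*N) := by ring
      rw [this, neg_one_pow_two_mul]
    have e4 : ((-1:ℝ))^(4*N+1) = -1 := by rw [pow_succ, e3]; ring
    have e5 : ((-1:ℝ))^(4*N+1+1) = 1 := by rw [pow_succ, e4]; ring
    have e6 : ((-1:ℝ))^(4*N+1+1+1) = -1 := by rw [pow_succ, e5]; ring
    rw [e1, e2, e3, e4, e5, e6]
    push_cast
    have hx : (0:ℝ) ≤ (N:ℝ) := Nat.cast_nonneg N
    have d1 : (N:ℝ)+1 ≠ 0 := by positivity
    have d2 : 4*(N:ℝ)+1 ≠ 0 := by positivity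
    have d3 : 4*(N:ℝ)+2 ≠ 0 := by positivity
    have d4 : 4*(N:ℝ)+3 ≠ 0 := by positivity
    have d5 : 4*(N:ℝ)+4 ≠ 0 := by positivity
    have d6 : 2*(N:ℝ)+1 ≠ 0 := by positivity
    have d7 : 2*(N:ℝ)+2 ≠ 0 := by positivity
    field_simp
    ring

lemma hf_nat : HasSum (fun n : ℕ => (1:ℝ)/(((n:ℝ)+1)*(4*(n:ℝ)+3)*(4*(n:ℝ)+1))) (π/3 - Real.log 2) := by
  rw [hasSum_iff_tendsto_nat_of_nonneg (fun i => by positivity)]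
  have hPa : Tendsto (fun N => Pa (2*N)) atTop (𝓝 (π/4)) :=
    Real.tendsto_sum_pi_div_four.comp tendsto_two_mul
  have hLb4 : Tendsto (fun N => Lb (4*N)) atTop (𝓝 (Real.log 2)) := by
    have h := tendsto_Lb_two.comp tendsto_two_mul
    convert h using 2 with N
    simp only [Function.comp]; ring_nf
  have hcomb := ((hPa.const_mul (4/3:ℝ)).sub (hLb4.const_mul (2/3:ℝ))).sub
    (tendsto_Lb_two.const_mul (1/3:ℝ))
  have : (4/3:ℝ)*(π/4) - 2/3*Real.log 2 - 1/3*Real.log 2 = π/3 - Real.log 2 := by ring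
  rw [this] at hcomb
  exact hcomb.congr (fun N => (key N).symm)

theorem stmt_3 : HasSum (fun n : ℕ+ => 1 / ((n : ℝ) * (4*(n : ℝ)-1) * (4*(n : ℝ)-3))) (π / 3 - Real.log 2) := by
  have h := (Equiv.pnatEquivNat.hasSum_iff).mpr hf_nat
  have hfun : (fun n : ℕ => (1:ℝ)/(((n:ℝ)+1)*(4*(n:ℝ)+3)*(4*(n:ℝ)+1))) ∘ ⇑Equiv.pnatEquivNat
      = (fun n : ℕ+ => 1 / ((n : ℝ) * (4*(n : ℝ)-1) * (4*(n : ℝ)-3))) := by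
    funext p
    have hp : ((PNat.natPred p : ℕ) : ℝ) = (p:ℝ) - 1 := by
      have h1 : PNat.natPred p + 1 = (p : ℕ) := p.natPred_add_one
      have h2 : ((PNat.natPred p + 1 : ℕ) : ℝ) = ((p : ℕ) : ℝ) := by rw [h1]
      push_cast at h2
      linarith
    simp only [Function.comp, Equiv.pnatEquivNat, Equiv.coe_fn_mk]
    rw [hp]
    ring_nf
  rwa [hfun] at h
end

section
/- The infinite series ∑_{n=1}^∞ 1/(n(4n+1)(4n-1)(4n-3)) converges to π/12 - ln 2 + 1/2. -/
/-!
Partial fractions give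
`1 / (n (4n+1) (4n-1) (4n-3)) = 1/(3n) - 1/(2(4n+1)) - 1/(4n-1) + 1/(6(4n-3))`.
Summing up to `N`, the `1/(4n+1)` terms telescope against the `1/(4n-3)` terms, and what is
left is expressed through the Leibniz partial sum `∑_{i<2N} (-1)^i/(2i+1) → π/4` and the differences
`H_{kN} - H_N → log k` of harmonic numbers (for `k = 2, 4`).
-/

open Real Filter Finset Topology

theorem tendsto_harmonic_mul_sub_harmonic {k : ℕ} (hk : 0 < k) :
    Tendsto (fun n : ℕ ↦ (harmonic (k * n) : ℝ) - harmonic n) atTop (𝓝 (log k)) := by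
  have hkn : Tendsto (fun n : ℕ ↦ k * n) atTop atTop := tendsto_id.const_mul_atTop' hk
  have := ((tendsto_harmonic_sub_log.comp hkn).sub tendsto_harmonic_sub_log).add_const (log k)
  rw [sub_self, zero_add] at this
  refine this.congr' ?_
  filter_upwards [eventually_ne_atTop 0] with n hn
  simp only [Function.comp_apply, Nat.cast_mul]
  rw [log_mul (by positivity) (by positivity)]
  ring

noncomputable def summand (n : ℕ) : ℝ :=
  1 / ((n : ℝ) * (4 * (n : ℝ) + 1) * (4 * (n : ℝ) - 1) * (4 * (n : ℝ) - 3))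

theorem summand_succ (n : ℕ) :
    summand (n + 1) = 1 / (((n : ℝ) + 1) * (4 * n + 5) * (4 * n + 3) * (4 * n + 1)) := by
  rw [summand]
  push_cast
  ring_nf

theorem summand_succ_nonneg (n : ℕ) : 0 ≤ summand (n + 1) := by
  rw [summand_succ]
  positivity

theorem sum_range_summand_succ (N : ℕ) :
    ∑ n ∈ range N, summand (n + 1) =
      1 / 3 * ∑ i ∈ range (2 * N), (-1 : ℝ) ^ i / (2 * i + 1)
        - 2 / 3 * ((harmonic (4 * N) : ℝ) - harmonic N)
        + 1 / 3 * ((harmonic (2 * N) : ℝ) - harmonic N)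
        + 1 / 2 - 1 / (2 * (4 * N + 1)) := by
  induction N with
  | zero => simp
  | succ n ih =>
    rw [sum_range_succ, ih, summand_succ, show 2 * (n + 1) = 2 * n + 1 + 1 by ring,
      show 4 * (n + 1) = 4 * n + 1 + 1 + 1 + 1 by ring]
    simp only [sum_range_succ, harmonic_succ, pow_succ, pow_mul]
    push_cast
    field_simp
    ring

theorem tendsto_sum_range_summand_succ :
    Tendsto (fun N ↦ ∑ n ∈ range N, summand (n + 1)) atTop (𝓝 (π / 12 - log 2 + 1 / 2)) := by
  have hleibniz : Tendsto (fun N : ℕ ↦ ∑ i ∈ range (2 * N), (-1 : ℝ) ^ i / (2 * i + 1))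
      atTop (𝓝 (π / 4)) :=
    tendsto_sum_pi_div_four.comp (tendsto_id.const_mul_atTop' two_pos)
  have hboundary : Tendsto (fun N : ℕ ↦ 1 / (2 * (4 * (N : ℝ) + 1))) atTop (𝓝 0) :=
    tendsto_const_nhds.div_atTop <| (tendsto_atTop_add_const_right _ _
      (tendsto_natCast_atTop_atTop.const_mul_atTop four_pos)).const_mul_atTop two_pos
  have hlim := ((((hleibniz.const_mul (1 / 3)).sub
    ((tendsto_harmonic_mul_sub_harmonic four_pos).const_mul (2 / 3))).add
    ((tendsto_harmonic_mul_sub_harmonic two_pos).const_mul (1 / 3))).add_const (1 / 2)).sub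
    hboundary
  have hlog4 : log ((4 : ℕ) : ℝ) = 2 * log 2 := by
    rw [show ((4 : ℕ) : ℝ) = 2 ^ 2 by norm_num, log_pow, Nat.cast_ofNat]
  rw [hlog4, Nat.cast_ofNat] at hlim
  simp_rw [sum_range_summand_succ]
  convert hlim using 2
  ring

theorem stmt_7 : HasSum (fun n : ℕ+ => 1 / ((n : ℝ) * (4*(n : ℝ)+1) * (4*(n : ℝ)-1) * (4*(n : ℝ)-3))) (π / 12 - Real.log 2 + 1 / 2) := by
  refine (hasSum_pnat_iff_hasSum_succ (f := summand)).mpr ?_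
  exact (hasSum_iff_tendsto_nat_of_nonneg summand_succ_nonneg _).mpr
    tendsto_sum_range_summand_succ
end
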